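/- Let μ be the uniform probability measure on {-1,1}^n. Define I(y) = Σ_{i=1}^n ( ((1+y_i)/2)·log(1+y_i) + ((1-y_i)/2)·log(1-y_i) ) for y ∈ [-1,1]^n. There exists a universal constant κ > 0 such that for every continuously differentiable function f : ℝ^n → ℝ, log ∫ e^f dμ ≤ sup_{y ∈ [-1,1]^n} ( f(y) - I(y) ) + κ · b(V), where V = ∇f([-1,1]^n) is the image of [-1,1]^n under the gradient of f, and b(V) = E[ sup_{ξ ∈ V} ⟨ξ,ε⟩ ] with ε uniformly distributed on {-1,1}^n. -/

import Mathlib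

open MeasureTheory Real Set ENNReal
open scoped Classical

/-- The uniform probability measure on the discrete hypercube `{-1,1}ⁿ`,
viewed as a measure on `ℝⁿ`. -/
noncomputable def cubeUniform (n : ℕ) : Measure (Fin n → ℝ) :=
  Measure.pi fun _ =>
    ((2 : ℝ≥0∞)⁻¹ • Measure.dirac (-1 : ℝ) + (2 : ℝ≥0∞)⁻¹ • Measure.dirac (1 : ℝ))

/-- The logarithmic Laplace transform `Λ_μ(ξ) = log ∫ e^{⟨ξ,x⟩} dμ(x)` of the uniform
measure on `{-1,1}ⁿ`. -/
noncomputable def logLaplaceCube (n : ℕ) (ξ : Fin n → ℝ) : ℝ :=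
  Real.log (∫ x, Real.exp (∑ i, ξ i * x i) ∂cubeUniform n)

/-- The solid hypercube `[-1,1]ⁿ`. -/
def solidCube (n : ℕ) : Set (Fin n → ℝ) := {y | ∀ i, y i ∈ Set.Icc (-1 : ℝ) 1}

/-- `I(y) = ∑ i, ((1+yᵢ)/2) log (1+yᵢ) + ((1-yᵢ)/2) log (1-yᵢ)`, the relative entropy
`H(μ_y | μ)` of the product measure with barycenter `y ∈ [-1,1]ⁿ` with respect to the
uniform measure on `{-1,1}ⁿ`. -/
noncomputable def cubeEnt (n : ℕ) (y : Fin n → ℝ) : ℝ :=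
  ∑ i, ((1 + y i) / 2 * Real.log (1 + y i) + (1 - y i) / 2 * Real.log (1 - y i))

/-!
Let `Φ z = sup_{y ∈ [-1,1]ⁿ} ⟨∇f(y), z⟩`. It is convex and positively homogeneous, and by the
mean value theorem `f x - f y ≤ Φ (x - y)` on the cube. The bound
`log E e^f ≤ sup (f - I) + E Φ(2ε)` is then proved by induction on the dimension. Conditioning on
the first coordinate, the one-dimensional Gibbs principle produces the barycentre `y₁` of that
coordinate under the Gibbs measure; the induction hypothesis applies to the slices of `f` at
`x₁ = ±1` against the slice of `f` at `y₁`, and the resulting error `E Φ(ε₁ - y₁, ·)` is at most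
`E Φ(2ε₁', ·)` for a symmetric sign `ε₁'`, by convexity. Homogeneity of `Φ` then gives `κ = 2`.
-/

lemma IsCompact.bddAbove_range_restrict {α β : Type*} [TopologicalSpace α] [LinearOrder α]
    [ClosedIciTopology α] [Nonempty α] [TopologicalSpace β] {f : β → α} {K : Set β}
    (hK : IsCompact K) (hf : ContinuousOn f K) : BddAbove (range fun p : K => f p) := by
  simpa only [image_eq_range] using hK.bddAbove_image hf

section SupportFunction

variable {E ι : Type*} [NormedAddCommGroup E] [NormedSpace ℝ E]

lemma convexOn_iSup_apply [Nonempty ι] (L : ι → StrongDual ℝ E)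
    (hL : ∀ z, BddAbove (range fun i => L i z)) : ConvexOn ℝ univ fun z => ⨆ i, L i z := by
  refine ⟨convex_univ, fun x _ y _ a b ha hb _ => ciSup_le fun i => ?_⟩
  simp only [map_add, map_smul, smul_eq_mul]
  gcongr
  exacts [le_ciSup (hL x) i, le_ciSup (hL y) i]

lemma iSup_apply_smul (L : ι → StrongDual ℝ E) {c : ℝ} (hc : 0 ≤ c) (z : E) :
    ⨆ i, L i (c • z) = c * ⨆ i, L i z := by
  simp only [map_smul, smul_eq_mul, mul_iSup_of_nonneg hc]

lemma sub_le_iSup_fderiv_apply {f : E → ℝ} (hf : Differentiable ℝ f) {K : Set E}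
    (hK : Convex ℝ K) {x y : E} (hx : x ∈ K) (hy : y ∈ K)
    (hbdd : BddAbove (range fun p : K => fderiv ℝ f p (x - y))) :
    f x - f y ≤ ⨆ p : K, fderiv ℝ f p (x - y) := by
  obtain ⟨p, hp, hfp⟩ := domain_mvt (fun p _ => (hf p).hasFDerivAt.hasFDerivWithinAt) hK hy hx
  rw [hfp]
  exact le_ciSup hbdd ⟨p, hK.segment_subset hy hx hp⟩

end SupportFunction

lemma ContinuousLinearMap.sum_apply_single_mul {ι : Type*} [Fintype ι] [DecidableEq ι]
    (L : StrongDual ℝ (ι → ℝ)) (x : ι → ℝ) : ∑ i, L (Pi.single i 1) * x i = L x := by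
  conv_rhs => rw [← Finset.univ_sum_single x, map_sum]
  congr! 1 with i
  rw [mul_comm, ← smul_eq_mul, ← map_smul, ← Pi.single_smul, smul_eq_mul, mul_one]

-- If a sign `ε` has mean `y`, then `ε - y` is dominated in the convex order by `2ε'`
-- for a symmetric sign `ε'`.
lemma ConvexOn.centred_sign_le {φ : ℝ → ℝ} (hφ : ConvexOn ℝ (Icc (-2) 2) φ) {y : ℝ}
    (hy : y ∈ Icc (-1 : ℝ) 1) :
    (1 + y) / 2 * φ (1 - y) + (1 - y) / 2 * φ (-1 - y) ≤ (φ 2 + φ (-2)) / 2 := by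
  obtain ⟨hy₁, hy₂⟩ := hy
  have h2 : (2 : ℝ) ∈ Icc (-2) 2 := by norm_num
  have h2' : (-2 : ℝ) ∈ Icc (-2) 2 := by norm_num
  have hp := hφ.2 h2 h2' (by linarith : 0 ≤ (3 - y) / 4) (by linarith : 0 ≤ (1 + y) / 4) (by ring)
  have hm := hφ.2 h2 h2' (by linarith : 0 ≤ (1 - y) / 4) (by linarith : 0 ≤ (3 + y) / 4) (by ring)
  simp only [smul_eq_mul] at hp hm
  rw [show (3 - y) / 4 * 2 + (1 + y) / 4 * -2 = 1 - y by ring] at hp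
  rw [show (1 - y) / 4 * 2 + (3 + y) / 4 * -2 = -1 - y by ring] at hm
  nlinarith [mul_le_mul_of_nonneg_left hp (by linarith : 0 ≤ (1 + y) / 2),
    mul_le_mul_of_nonneg_left hm (by linarith : 0 ≤ (1 - y) / 2)]

section FinCons

variable {n : ℕ}

lemma Fin.cons_sub_cons (a b : ℝ) (x y : Fin n → ℝ) :
    (Fin.cons a x : Fin (n + 1) → ℝ) - Fin.cons b y = Fin.cons (a - b) (x - y) :=
  Matrix.cons_sub_cons a x b y

lemma Fin.smul_cons (c a : ℝ) (x : Fin n → ℝ) :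
    c • (Fin.cons a x : Fin (n + 1) → ℝ) = Fin.cons (c * a) (c • x) :=
  Matrix.smul_cons c a x

lemma Fintype.sum_fin_succ_pi {α M : Type*} [Fintype α] [AddCommMonoid M]
    (G : (Fin (n + 1) → α) → M) : ∑ s, G s = ∑ a, ∑ t : Fin n → α, G (Fin.cons a t) := by
  rw [← (Fin.consEquiv fun _ => α).sum_comp, Fintype.sum_prod_type]
  rfl

variable {Ψ : (Fin (n + 1) → ℝ) → ℝ}

lemma ConvexOn.comp_fin_cons_left (hΨ : ConvexOn ℝ univ Ψ) (z : Fin n → ℝ) :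
    ConvexOn ℝ univ fun c : ℝ => Ψ (Fin.cons c z) := by
  refine ⟨convex_univ, fun c _ d _ a b ha hb hab => ?_⟩
  convert hΨ.2 (mem_univ (Fin.cons c z : Fin (n + 1) → ℝ)) (mem_univ (Fin.cons d z)) ha hb hab
    using 2
  ext i
  cases i using Fin.cases <;> simp [← add_mul, hab]

lemma ConvexOn.comp_fin_cons_right (hΨ : ConvexOn ℝ univ Ψ) (c : ℝ) :
    ConvexOn ℝ univ fun z : Fin n → ℝ => Ψ (Fin.cons c z) := by
  refine ⟨convex_univ, fun x _ y _ a b ha hb hab => ?_⟩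
  convert hΨ.2 (mem_univ (Fin.cons c x : Fin (n + 1) → ℝ)) (mem_univ (Fin.cons c y)) ha hb hab
    using 2
  ext i
  cases i using Fin.cases <;> simp [← add_mul, hab]

end FinCons

section Cube

def boolSign (b : Bool) : ℝ := if b then 1 else -1

lemma boolSign_mem_Icc (b : Bool) : boolSign b ∈ Icc (-1 : ℝ) 1 := by
  cases b <;> norm_num [boolSign]

variable {n : ℕ}

lemma solidCube_eq_pi (n : ℕ) : solidCube n = univ.pi fun _ => Icc (-1 : ℝ) 1 := by
  ext; simp only [solidCube, mem_ofPred_eq, mem_pi, mem_univ, true_implies]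

lemma isCompact_solidCube (n : ℕ) : IsCompact (solidCube n) :=
  solidCube_eq_pi n ▸ isCompact_univ_pi fun _ => isCompact_Icc

lemma convex_solidCube (n : ℕ) : Convex ℝ (solidCube n) :=
  solidCube_eq_pi n ▸ convex_pi fun _ _ => convex_Icc _ _

lemma zero_mem_solidCube (n : ℕ) : 0 ∈ solidCube n := fun _ => by norm_num

lemma boolSign_comp_mem_solidCube (s : Fin n → Bool) : boolSign ∘ s ∈ solidCube n :=
  fun i => boolSign_mem_Icc (s i)

lemma fin_cons_mem_solidCube_iff {c : ℝ} {y : Fin n → ℝ} :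
    (Fin.cons c y : Fin (n + 1) → ℝ) ∈ solidCube (n + 1) ↔ c ∈ Icc (-1 : ℝ) 1 ∧ y ∈ solidCube n :=
  Fin.forall_fin_succ

lemma cubeUniform_eq_sum_dirac (n : ℕ) :
    cubeUniform n = ∑ s : Fin n → Bool, ((2 : ℝ≥0∞) ^ n)⁻¹ • Measure.dirac (boolSign ∘ s) := by
  set β : Measure Bool := (2 : ℝ≥0∞)⁻¹ • Measure.dirac false + (2 : ℝ≥0∞)⁻¹ • Measure.dirac true
  have : IsFiniteMeasure β := ⟨by simp [β]⟩
  have hβ : β.map boolSign =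
      (2 : ℝ≥0∞)⁻¹ • Measure.dirac (-1 : ℝ) + (2 : ℝ≥0∞)⁻¹ • Measure.dirac (1 : ℝ) := by
    simp only [β, Measure.map_add _ _ (measurable_of_finite boolSign), Measure.map_smul,
      Measure.map_dirac' (measurable_of_finite boolSign)]
    rfl
  have hpi : cubeUniform n = (Measure.pi fun _ : Fin n => β).map (fun s i => boolSign (s i)) := by
    rw [Measure.pi_map_pi (fun _ => (measurable_of_finite _).aemeasurable), hβ]
    rfl
  rw [hpi, ← Measure.sum_smul_dirac (Measure.pi fun _ : Fin n => β),
    Measure.map_sum (measurable_of_finite _).aemeasurable, Measure.sum_fintype]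
  refine Finset.sum_congr rfl fun s _ => ?_
  rw [Measure.map_smul, Measure.map_dirac' (measurable_of_finite _), Measure.pi_singleton]
  have hβ_singleton (b : Bool) : β {b} = 2⁻¹ := by cases b <;> simp [β]
  simp only [hβ_singleton, Finset.prod_const, Finset.card_univ, Fintype.card_fin, ENNReal.inv_pow]
  rfl

lemma integral_cubeUniform (g : (Fin n → ℝ) → ℝ) :
    ∫ x, g x ∂cubeUniform n = (∑ s : Fin n → Bool, g (boolSign ∘ s)) / 2 ^ n := by
  rw [cubeUniform_eq_sum_dirac, integral_finsetSum_measure fun s _ =>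
    (integrable_dirac enorm_lt_top).smul_measure (by simp)]
  simp [integral_smul_measure, integral_dirac, div_eq_inv_mul, Finset.mul_sum]

noncomputable def binaryEnt (t : ℝ) : ℝ :=
  (1 + t) / 2 * Real.log (1 + t) + (1 - t) / 2 * Real.log (1 - t)

lemma cubeEnt_eq_sum_binaryEnt (y : Fin n → ℝ) : cubeEnt n y = ∑ i, binaryEnt (y i) := rfl

lemma cubeEnt_fin_cons (c : ℝ) (y : Fin n → ℝ) :
    cubeEnt (n + 1) (Fin.cons c y) = binaryEnt c + cubeEnt n y := by
  simp [cubeEnt_eq_sum_binaryEnt, Fin.sum_univ_succ]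

lemma continuous_binaryEnt : Continuous binaryEnt := by
  have h : binaryEnt = fun t => ((1 + t) * Real.log (1 + t) + (1 - t) * Real.log (1 - t)) / 2 := by
    ext t; simp only [binaryEnt]; ring
  rw [h]
  exact ((continuous_mul_log.comp (by fun_prop)).add
    (continuous_mul_log.comp (by fun_prop))).div_const 2

lemma continuous_cubeEnt (n : ℕ) : Continuous (cubeEnt n) := by
  simp only [funext (cubeEnt_eq_sum_binaryEnt (n := n))]
  exact continuous_finsetSum _ fun i _ => continuous_binaryEnt.comp (continuous_apply i)

lemma exists_log_mean_exp_eq (a b : ℝ) : ∃ y ∈ Icc (-1 : ℝ) 1,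
    Real.log ((exp a + exp b) / 2) = (1 + y) / 2 * a + (1 - y) / 2 * b - binaryEnt y := by
  set Z := exp a + exp b
  have hZ : 0 < Z := by positivity
  refine ⟨(exp a - exp b) / Z, ⟨?_, ?_⟩, ?_⟩
  · rw [le_div_iff₀ hZ]; linarith [exp_pos a]
  · rw [div_le_iff₀ hZ]; linarith [exp_pos b]
  have h₁ : 1 + (exp a - exp b) / Z = 2 * exp a / Z := by field_simp; ring
  have h₂ : 1 - (exp a - exp b) / Z = 2 * exp b / Z := by field_simp; ring
  have hlog (c : ℝ) : Real.log (2 * exp c / Z) = Real.log 2 + c - Real.log Z := by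
    rw [Real.log_div (by positivity) hZ.ne', Real.log_mul two_ne_zero (exp_ne_zero c),
      Real.log_exp]
  rw [binaryEnt, h₁, h₂, hlog, hlog, Real.log_div hZ.ne' two_ne_zero]
  field_simp
  ring

lemma ConvexOn.sum_fin_cons_centred_sign_le {Ψ : (Fin (n + 1) → ℝ) → ℝ}
    (hΨ : ConvexOn ℝ univ Ψ) {y : ℝ} (hy : y ∈ Icc (-1 : ℝ) 1) :
    (1 + y) / 2 * ∑ t : Fin n → Bool, Ψ (Fin.cons (1 - y) ((2 : ℝ) • (boolSign ∘ t)))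
      + (1 - y) / 2 * ∑ t : Fin n → Bool, Ψ (Fin.cons (-1 - y) ((2 : ℝ) • (boolSign ∘ t)))
      ≤ (∑ s, Ψ ((2 : ℝ) • (boolSign ∘ s))) / 2 := by
  rw [Finset.mul_sum, Finset.mul_sum, ← Finset.sum_add_distrib, Fintype.sum_fin_succ_pi,
    Fintype.sum_bool, ← Finset.sum_add_distrib, Finset.sum_div]
  gcongr with t
  simp only [Fin.comp_cons, Fin.smul_cons, boolSign, if_true, Bool.false_eq_true, if_false,
    mul_one, mul_neg]
  exact ((hΨ.comp_fin_cons_left _).subset (subset_univ _) (convex_Icc _ _)).centred_sign_le hy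

theorem log_mean_exp_le {F : (Fin n → Bool) → ℝ} {g Ψ : (Fin n → ℝ) → ℝ} {S : ℝ}
    (hΨ : ConvexOn ℝ univ Ψ) (hFg : ∀ s, ∀ y ∈ solidCube n, F s - g y ≤ Ψ (boolSign ∘ s - y))
    (hg : ∀ y ∈ solidCube n, g y - cubeEnt n y ≤ S) :
    Real.log ((∑ s, exp (F s)) / 2 ^ n) ≤ S + (∑ s, Ψ ((2 : ℝ) • (boolSign ∘ s))) / 2 ^ n := by
  induction n generalizing S with
  | zero =>
    obtain ⟨s⟩ : Nonempty (Fin 0 → Bool) := inferInstance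
    have hF := (hFg s _ (boolSign_comp_mem_solidCube s)).trans_eq
      (congrArg Ψ (Subsingleton.elim _ ((2 : ℝ) • (boolSign ∘ s))))
    have hS := hg _ (boolSign_comp_mem_solidCube s)
    simp only [cubeEnt, Finset.univ_eq_empty, Finset.sum_empty, sub_zero] at hS
    rw [Fintype.sum_subsingleton _ s, Fintype.sum_subsingleton _ s, pow_zero, div_one, div_one,
      Real.log_exp]
    linarith
  | succ n ih =>
    set Fb : Bool → ℝ := fun b => Real.log ((∑ t, exp (F (Fin.cons b t))) / 2 ^ n)
    obtain ⟨y, hy, hlog⟩ := exists_log_mean_exp_eq (Fb true) (Fb false)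
    set R : Bool → ℝ := fun b =>
      (∑ t : Fin n → Bool, Ψ (Fin.cons (boolSign b - y) ((2 : ℝ) • (boolSign ∘ t)))) / 2 ^ n
    have hFb (b : Bool) : Fb b ≤ S + binaryEnt y + R b := by
      refine ih (g := fun y' => g (Fin.cons y y')) (hΨ.comp_fin_cons_right _)
        (fun t y' hy' => ?_) (fun y' hy' => ?_)
      · have := hFg (Fin.cons b t) (Fin.cons y y') (fin_cons_mem_solidCube_iff.2 ⟨hy, hy'⟩)
        rwa [Fin.comp_cons, Fin.cons_sub_cons] at this
      · have := hg (Fin.cons y y') (fin_cons_mem_solidCube_iff.2 ⟨hy, hy'⟩)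
        rw [cubeEnt_fin_cons] at this
        linarith
    have hsplit : (∑ s, exp (F s)) / 2 ^ (n + 1) = (exp (Fb true) + exp (Fb false)) / 2 := by
      have hpos (b : Bool) : 0 < (∑ t, exp (F (Fin.cons b t))) / 2 ^ n := by positivity
      rw [Fintype.sum_fin_succ_pi, Fintype.sum_bool, Real.exp_log (hpos true),
        Real.exp_log (hpos false), pow_succ]
      ring
    have hR : (1 + y) / 2 * R true + (1 - y) / 2 * R false ≤
        (∑ s, Ψ ((2 : ℝ) • (boolSign ∘ s))) / 2 ^ (n + 1) := by
      have h := div_le_div_of_nonneg_right (hΨ.sum_fin_cons_centred_sign_le hy)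
        (pow_pos two_pos n).le
      simp only [R, boolSign, if_true, Bool.false_eq_true, if_false, pow_succ]
      exact le_of_eq_of_le (by ring) (h.trans_eq (by ring))
    rw [hsplit, hlog]
    nlinarith [mul_le_mul_of_nonneg_left (hFb true) (by linarith [hy.1] : 0 ≤ (1 + y) / 2),
      mul_le_mul_of_nonneg_left (hFb false) (by linarith [hy.2] : 0 ≤ (1 - y) / 2)]

end Cube

/-- **Dimension-free mean-field approximation on the discrete hypercube.** There is a
universal constant `κ > 0` such that for every `C¹` function `f : ℝⁿ → ℝ`,
`log ∫ e^f dμ ≤ sup_{y ∈ [-1,1]ⁿ} (f(y) - I(y)) + κ b(V)` where `V = ∇f([-1,1]ⁿ)` and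
`b(V) = E[sup_{ξ ∈ V} ⟨ξ,ε⟩]`, `ε` uniform on `{-1,1}ⁿ`. -/
theorem meanField_cube :
    ∃ κ : ℝ, 0 < κ ∧ ∀ (n : ℕ) (f : (Fin n → ℝ) → ℝ), ContDiff ℝ 1 f →
      Real.log (∫ x, Real.exp (f x) ∂cubeUniform n) ≤
        (⨆ y : solidCube n, (f y - cubeEnt n y)) +
          κ * ∫ x, (⨆ y : solidCube n, ∑ i, fderiv ℝ f y (Pi.single i 1) * x i)
            ∂cubeUniform n := by
  refine ⟨2, two_pos, fun n f hf => ?_⟩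
  have : Nonempty (solidCube n) := ⟨⟨0, zero_mem_solidCube n⟩⟩
  have hbdd (z : Fin n → ℝ) : BddAbove (range fun y : solidCube n => fderiv ℝ f y z) :=
    (isCompact_solidCube n).bddAbove_range_restrict
      ((hf.continuous_fderiv one_ne_zero).clm_apply continuous_const).continuousOn
  have hFg (s : Fin n → Bool) (y) (hy : y ∈ solidCube n) :=
    sub_le_iSup_fderiv_apply (hf.differentiable one_ne_zero) (convex_solidCube n)
      (boolSign_comp_mem_solidCube s) hy (hbdd _)
  have hg (y) (hy : y ∈ solidCube n) : f y - cubeEnt n y ≤ ⨆ y : solidCube n, (f y - cubeEnt n y) :=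
    le_ciSup ((isCompact_solidCube n).bddAbove_range_restrict
      (hf.continuous.sub (continuous_cubeEnt n)).continuousOn) ⟨y, hy⟩
  have key := log_mean_exp_le (convexOn_iSup_apply _ hbdd) hFg hg
  simp only [iSup_apply_smul _ zero_le_two, ← Finset.mul_sum, mul_div_assoc] at key
  simpa only [integral_cubeUniform, ContinuousLinearMap.sum_apply_single_mul] using key
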